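/- arXiv:2510.18738 — 2 statements merged into one kernel-verified Lean document; each statement's English description precedes it below -/
import Mathlib

section
/- Let (X_k) be a bounded sequence of vectors in ℝ^d, A₀ positive definite, A_k = A₀ + ∑_{i=1}^k X_i X_iᵀ. Then ∑_{k=1}^∞ (X_kᵀ A_{k-1}⁻¹ X_k)² < ∞. -/
/-!
By Sherman–Morrison, adding `x xᵀ` to a positive definite `M` lowers `tr M⁻¹` by
`‖M⁻¹ x‖² / (1 + xᵀ M⁻¹ x)`, while Cauchy–Schwarz gives `(xᵀ M⁻¹ x)² ≤ ‖x‖² ‖M⁻¹ x‖²`.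
Hence `a_k² / (1 + a_k)`, with `a_k = X_kᵀ A_{k-1}⁻¹ X_k`, is bounded by `sup ‖X_k‖²` times the
decrement of the nonnegative, decreasing sequence `tr A_k⁻¹`, so it is summable. Since
`a ≤ 1 + a² / (1 + a)`, the `a_k` are eventually bounded and `a_k²` is summable as well.
-/

open Matrix Finset

namespace Matrix

section Field

variable {n 𝕜 : Type*} [Fintype n] [DecidableEq n] [Field 𝕜]

/-- The **Sherman–Morrison formula**. -/
theorem inv_add_vecMulVec {M : Matrix n n 𝕜} (hM : IsUnit M.det) (x y : n → 𝕜)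
    (h : 1 + y ⬝ᵥ M⁻¹ *ᵥ x ≠ 0) :
    (M + vecMulVec x y)⁻¹ =
      M⁻¹ - (1 + y ⬝ᵥ M⁻¹ *ᵥ x)⁻¹ • vecMulVec (M⁻¹ *ᵥ x) (y ᵥ* M⁻¹) := by
  refine inv_eq_right_inv ?_
  rw [Matrix.add_mul, Matrix.mul_sub, Matrix.mul_sub, Matrix.mul_smul, Matrix.mul_smul,
    mul_vecMulVec, mulVec_mulVec, mul_nonsing_inv M hM, one_mulVec, vecMulVec_mul_vecMulVec,
    vecMulVec_mul, vecMulVec_smul]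
  match_scalars
  · rfl
  · field_simp
    ring

theorem trace_inv_sub_trace_inv_add_vecMulVec {M : Matrix n n 𝕜} (hM : IsUnit M.det)
    (x y : n → 𝕜) (h : 1 + y ⬝ᵥ M⁻¹ *ᵥ x ≠ 0) :
    trace M⁻¹ - trace (M + vecMulVec x y)⁻¹ =
      (M⁻¹ *ᵥ x) ⬝ᵥ (y ᵥ* M⁻¹) / (1 + y ⬝ᵥ M⁻¹ *ᵥ x) := by
  rw [inv_add_vecMulVec hM x y h, trace_sub, trace_smul, trace_vecMulVec, sub_sub_cancel,
    smul_eq_mul, inv_mul_eq_div]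

end Field

theorem dotProduct_sq_le {n R : Type*} [Fintype n] [CommRing R] [LinearOrder R]
    [IsStrictOrderedRing R] (x y : n → R) : (x ⬝ᵥ y) ^ 2 ≤ (x ⬝ᵥ x) * (y ⬝ᵥ y) := by
  simpa only [dotProduct, sq] using sum_mul_sq_le_sq_mul_sq univ x y

theorem dotProduct_self_le_card_mul_norm_sq {n : Type*} [Fintype n] (x : n → ℝ) :
    x ⬝ᵥ x ≤ Fintype.card n * ‖x‖ ^ 2 := by
  calc x ⬝ᵥ x = ∑ i, ‖x i‖ ^ 2 := by simp only [dotProduct, Real.norm_eq_abs, sq_abs, ← sq]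
    _ ≤ ∑ _i : n, ‖x‖ ^ 2 := by gcongr with i; exact norm_le_pi_norm x i
    _ = Fintype.card n * ‖x‖ ^ 2 := by rw [sum_const, card_univ, nsmul_eq_mul]

namespace PosDef

theorem add_vecMulVec_self {n : Type*} [Fintype n] {M : Matrix n n ℝ} (hM : M.PosDef)
    (x : n → ℝ) : (M + vecMulVec x x).PosDef := by
  simpa using hM.add_posSemidef (posSemidef_vecMulVec_self_star x)

variable {n : Type*} [Fintype n] [DecidableEq n] {M : Matrix n n ℝ}

theorem dotProduct_inv_mulVec_nonneg (hM : M.PosDef) (x : n → ℝ) : 0 ≤ x ⬝ᵥ M⁻¹ *ᵥ x := by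
  simpa using hM.inv.posSemidef.dotProduct_mulVec_nonneg x

theorem trace_inv_sub_trace_inv_add_vecMulVec_self (hM : M.PosDef) (x : n → ℝ) :
    trace M⁻¹ - trace (M + vecMulVec x x)⁻¹ =
      (M⁻¹ *ᵥ x) ⬝ᵥ (M⁻¹ *ᵥ x) / (1 + x ⬝ᵥ M⁻¹ *ᵥ x) := by
  have hpos : 0 < 1 + x ⬝ᵥ M⁻¹ *ᵥ x := by linarith [hM.dotProduct_inv_mulVec_nonneg x]
  rw [trace_inv_sub_trace_inv_add_vecMulVec hM.det_pos.ne'.isUnit x x hpos.ne',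
    ← mulVec_transpose, ← conjTranspose_eq_transpose_of_trivial, hM.inv.isHermitian.eq]

theorem trace_inv_add_vecMulVec_self_le (hM : M.PosDef) (x : n → ℝ) :
    trace (M + vecMulVec x x)⁻¹ ≤ trace M⁻¹ := by
  have := hM.dotProduct_inv_mulVec_nonneg x
  have : 0 ≤ (M⁻¹ *ᵥ x) ⬝ᵥ (M⁻¹ *ᵥ x) := by simpa using dotProduct_star_self_nonneg (M⁻¹ *ᵥ x)
  rw [← sub_nonneg, hM.trace_inv_sub_trace_inv_add_vecMulVec_self x]
  positivity

theorem sq_div_one_add_le_mul_trace_inv_sub (hM : M.PosDef) (x : n → ℝ) :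
    (x ⬝ᵥ M⁻¹ *ᵥ x) ^ 2 / (1 + x ⬝ᵥ M⁻¹ *ᵥ x) ≤
      (x ⬝ᵥ x) * (trace M⁻¹ - trace (M + vecMulVec x x)⁻¹) := by
  rw [hM.trace_inv_sub_trace_inv_add_vecMulVec_self, mul_div_assoc']
  have hpos : 0 < 1 + x ⬝ᵥ M⁻¹ *ᵥ x := by linarith [hM.dotProduct_inv_mulVec_nonneg x]
  gcongr
  exact dotProduct_sq_le x _

end PosDef

end Matrix

theorem summable_sub_succ_of_antitone {g : ℕ → ℝ} (hg : Antitone g) {b : ℝ}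
    (hb : ∀ k, b ≤ g k) : Summable fun k => g k - g (k + 1) := by
  refine summable_of_sum_range_le (c := g 0 - b) (fun k => sub_nonneg.2 (hg k.le_succ)) ?_
  intro n
  rw [sum_range_sub']
  linarith [hb n]

theorem summable_sq_of_summable_sq_div_one_add {a : ℕ → ℝ} (ha : ∀ k, 0 ≤ a k)
    (h : Summable fun k => a k ^ 2 / (1 + a k)) : Summable fun k => a k ^ 2 := by
  -- once `a² / (1 + a) ≤ 1` we have `a ≤ 2`, hence `a² ≤ 3 a² / (1 + a)`
  refine (h.mul_left 3).of_norm_bounded_eventually_nat ?_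
  filter_upwards [h.tendsto_atTop_zero.eventually (Iic_mem_nhds one_pos)] with k hk
  have hpos : 0 < 1 + a k := by linarith [ha k]
  set f := a k ^ 2 / (1 + a k) with hf
  have hsq : a k ^ 2 = (1 + a k) * f := by rw [hf]; field_simp
  have hf0 : 0 ≤ f := by positivity
  rw [Real.norm_of_nonneg (sq_nonneg _)]
  nlinarith [ha k, hk]

open Matrix in
theorem guo_square_summable (d : ℕ) (A₀ : Matrix (Fin d) (Fin d) ℝ)
    (hA₀ : A₀.PosDef) (X : ℕ → Fin d → ℝ)
    (hX : ∃ B : ℝ, ∀ k, ‖X k‖ ≤ B)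
    (A : ℕ → Matrix (Fin d) (Fin d) ℝ)
    (hA0 : A 0 = A₀)
    (hrec : ∀ k : ℕ, A (k + 1) = A k + vecMulVec (X (k + 1)) (X (k + 1))) :
    Summable (fun k : ℕ => (X (k + 1) ⬝ᵥ (A k)⁻¹ *ᵥ X (k + 1)) ^ 2) := by
  obtain ⟨B, hB⟩ := hX
  have hpd : ∀ k, (A k).PosDef := by
    intro k
    induction k with
    | zero => rwa [hA0]
    | succ k ih => rw [hrec]; exact ih.add_vecMulVec_self _
  have hX2 : ∀ k, X k ⬝ᵥ X k ≤ d * B ^ 2 := fun k => calc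
    X k ⬝ᵥ X k ≤ d * ‖X k‖ ^ 2 := by simpa using dotProduct_self_le_card_mul_norm_sq (X k)
    _ ≤ d * B ^ 2 := by gcongr; exact hB k
  set a : ℕ → ℝ := fun k => X (k + 1) ⬝ᵥ (A k)⁻¹ *ᵥ X (k + 1)
  set g : ℕ → ℝ := fun k => trace (A k)⁻¹
  have ha : ∀ k, 0 ≤ a k := fun k => (hpd k).dotProduct_inv_mulVec_nonneg _
  have hg : Antitone g := antitone_nat_of_succ_le fun k => by
    simpa only [g, hrec] using (hpd k).trace_inv_add_vecMulVec_self_le (X (k + 1))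
  have hstep : ∀ k, a k ^ 2 / (1 + a k) ≤ d * B ^ 2 * (g k - g (k + 1)) := fun k => calc
    a k ^ 2 / (1 + a k) ≤ (X (k + 1) ⬝ᵥ X (k + 1)) * (g k - g (k + 1)) := by
      simpa only [a, g, hrec] using (hpd k).sq_div_one_add_le_mul_trace_inv_sub (X (k + 1))
    _ ≤ d * B ^ 2 * (g k - g (k + 1)) :=
      mul_le_mul_of_nonneg_right (hX2 _) (sub_nonneg.2 (hg k.le_succ))
  have hg0 : ∀ k, 0 ≤ g k := fun k => (hpd k).inv.posSemidef.trace_nonneg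
  refine summable_sq_of_summable_sq_div_one_add ha ?_
  exact .of_nonneg_of_le (fun k => by have := ha k; positivity) hstep
    ((summable_sub_succ_of_antitone hg hg0).mul_left _)
end

section
/- (Koopman–von Neumann) Let (a_k)_{k≥0} be a bounded sequence of non-negative reals. Then (1/n)∑_{k=0}^{n-1} a_k → 0 if and only if there exists a set E ⊆ ℕ of density zero (i.e., (1/n)·#{k < n : k ∈ E} → 0) such that a_n → 0 along n ∉ E. -/
open Filter Finset

lemma kvn_card_mul_le_sum (a : ℕ → ℝ) (h : ∀ k, 0 ≤ a k) (δ : ℝ) (n : ℕ) :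
    (({k ∈ Finset.range n | δ ≤ a k}).card : ℝ) * δ ≤ ∑ k ∈ Finset.range n, a k := by
  classical
  calc (({k ∈ Finset.range n | δ ≤ a k}).card : ℝ) * δ
      = ∑ _k ∈ {k ∈ Finset.range n | δ ≤ a k}, δ := by
        rw [Finset.sum_const, nsmul_eq_mul]
    _ ≤ ∑ k ∈ {k ∈ Finset.range n | δ ≤ a k}, a k :=
        Finset.sum_le_sum (fun k hk => (Finset.mem_filter.1 hk).2)
    _ ≤ ∑ k ∈ Finset.range n, a k :=
        Finset.sum_le_sum_of_subset_of_nonneg (Finset.filter_subset _ _)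
          (fun k _ _ => h k)


lemma kvn_easy (a : ℕ → ℝ) (hnonneg : ∀ k, 0 ≤ a k) (C : ℝ) (hC : ∀ k, a k ≤ C)
    (hCpos : 0 < C) (E : ℕ → Prop) [DecidablePred E]
    (hdens : Tendsto (fun n : ℕ =>
        (({k ∈ Finset.range n | E k}).card : ℝ) / n) atTop (nhds 0))
    (hconv : ∀ ε > 0, ∃ N : ℕ, ∀ n ≥ N, ¬ E n → a n < ε) :
    Tendsto (fun n : ℕ => (∑ k ∈ Finset.range n, a k) / n) atTop (nhds 0) := by
  rw [Metric.tendsto_atTop]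
  intro ε hε
  obtain ⟨N1, hN1⟩ := hconv (ε/3) (by linarith)
  obtain ⟨N2, hN2⟩ := Metric.tendsto_atTop.1 hdens (ε/(3*C)) (by positivity)
  set K : ℝ := ∑ k ∈ Finset.range N1, a k with hK
  obtain ⟨N3, hN3⟩ := Metric.tendsto_atTop.1 (tendsto_const_div_atTop_nhds_zero_nat K)
      (ε/3) (by linarith)
  refine ⟨max (max N1 N2) (max N3 1), fun n hn => ?_⟩
  have hnN1 : N1 ≤ n := le_trans (le_trans (le_max_left _ _) (le_max_left _ _)) hn
  have hnN2 : N2 ≤ n := le_trans (le_trans (le_max_right _ _) (le_max_left _ _)) hn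
  have hnN3 : N3 ≤ n := le_trans (le_trans (le_max_left _ _) (le_max_right _ _)) hn
  have hn1 : 1 ≤ n := le_trans (le_trans (le_max_right _ _) (le_max_right _ _)) hn
  have hnpos : (0:ℝ) < n := by exact_mod_cast hn1
  have hSnonneg : 0 ≤ ∑ k ∈ Finset.range n, a k :=
    Finset.sum_nonneg (fun k _ => hnonneg k)
  rw [Real.dist_eq, sub_zero, abs_of_nonneg (by positivity)]
  -- split the sum
  have hsplit : ∑ k ∈ Finset.range n, a k
      = K + ∑ k ∈ Finset.Ico N1 n, a k := by
    rw [hK, ← Finset.sum_range_add_sum_Ico a hnN1]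
  have hIco : ∑ k ∈ Finset.Ico N1 n, a k
      ≤ C * (({k ∈ Finset.range n | E k}).card : ℝ) + n * (ε/3) := by
    classical
    rw [← Finset.sum_filter_add_sum_filter_not (Finset.Ico N1 n) E a]
    have h1 : ∑ k ∈ {k ∈ Finset.Ico N1 n | E k}, a k
        ≤ C * (({k ∈ Finset.range n | E k}).card : ℝ) := by
      calc ∑ k ∈ {k ∈ Finset.Ico N1 n | E k}, a k
          ≤ ∑ _k ∈ {k ∈ Finset.Ico N1 n | E k}, C :=
            Finset.sum_le_sum (fun k _ => hC k)
        _ = (({k ∈ Finset.Ico N1 n | E k}).card : ℝ) * C := by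
            rw [Finset.sum_const, nsmul_eq_mul]
        _ ≤ (({k ∈ Finset.range n | E k}).card : ℝ) * C := by
            have hsub : Finset.Ico N1 n ⊆ Finset.range n := fun k hk =>
              Finset.mem_range.2 (Finset.mem_Ico.1 hk).2
            have h := Finset.card_le_card (Finset.filter_subset_filter E hsub)
            exact mul_le_mul_of_nonneg_right (by exact_mod_cast h) (le_of_lt hCpos)
        _ = C * (({k ∈ Finset.range n | E k}).card : ℝ) := mul_comm _ _
    have h2 : ∑ k ∈ {k ∈ Finset.Ico N1 n | ¬ E k}, a k ≤ n * (ε/3) := by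
      calc ∑ k ∈ {k ∈ Finset.Ico N1 n | ¬ E k}, a k
          ≤ ∑ _k ∈ {k ∈ Finset.Ico N1 n | ¬ E k}, (ε/3) := by
            refine Finset.sum_le_sum (fun k hk => ?_)
            obtain ⟨hk1, hk2⟩ := Finset.mem_filter.1 hk
            exact le_of_lt (hN1 k (Finset.mem_Ico.1 hk1).1 hk2)
        _ = (({k ∈ Finset.Ico N1 n | ¬ E k}).card : ℝ) * (ε/3) := by
            rw [Finset.sum_const, nsmul_eq_mul]
        _ ≤ n * (ε/3) := by
            gcongr
            have : ({k ∈ Finset.Ico N1 n | ¬ E k}).card ≤ n := by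
              calc ({k ∈ Finset.Ico N1 n | ¬ E k}).card
                  ≤ (Finset.Ico N1 n).card := Finset.card_le_card (Finset.filter_subset _ _)
                _ ≤ n := by rw [Nat.card_Ico]; exact Nat.sub_le n N1
            exact_mod_cast this
    linarith
  have hd : (({k ∈ Finset.range n | E k}).card : ℝ) / n < ε/(3*C) := by
    have := hN2 n hnN2
    rwa [Real.dist_eq, sub_zero, abs_of_nonneg (by positivity)] at this
  have hK3 : K / n < ε/3 := by
    have := hN3 n hnN3
    have hKnn : 0 ≤ K := Finset.sum_nonneg (fun k _ => hnonneg k)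
    rwa [Real.dist_eq, sub_zero, abs_of_nonneg (by positivity)] at this
  have hcd : C * ((({k ∈ Finset.range n | E k}).card : ℝ) / n) < ε/3 := by
    have := mul_lt_mul_of_pos_left hd hCpos
    calc C * ((({k ∈ Finset.range n | E k}).card : ℝ) / n) < C * (ε/(3*C)) := this
      _ = ε/3 := by field_simp
  calc (∑ k ∈ Finset.range n, a k) / n
      ≤ (K + (C * (({k ∈ Finset.range n | E k}).card : ℝ) + n * (ε/3))) / n := by
        gcongr
        rw [hsplit]; linarith
    _ = K/n + C * ((({k ∈ Finset.range n | E k}).card : ℝ) / n) + ε/3 := by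
        field_simp; ring
    _ < ε := by linarith

lemma kvn_hard (a : ℕ → ℝ) (hnonneg : ∀ k, 0 ≤ a k)
    (h : Tendsto (fun n : ℕ => (∑ k ∈ Finset.range n, a k) / n) atTop (nhds 0)) :
    ∃ E : ℕ → Prop, ∃ _ : DecidablePred E,
      Tendsto (fun n : ℕ =>
          (({k ∈ Finset.range n | E k}).card : ℝ) / n) atTop (nhds 0) ∧
      (∀ ε > 0, ∃ N : ℕ, ∀ n ≥ N, ¬ E n → a n < ε) := by
  classical
  have hBex : ∀ m : ℕ, ∃ B : ℕ, ∀ n ≥ B,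
      (∑ k ∈ Finset.range n, a k) / n < 1/((m+1:ℝ)^2) := by
    intro m
    obtain ⟨B, hB⟩ := Metric.tendsto_atTop.1 h (1/((m+1:ℝ)^2)) (by positivity)
    refine ⟨B, fun n hn => ?_⟩
    have := hB n hn
    rw [Real.dist_eq, sub_zero] at this
    exact lt_of_abs_lt this
  choose B hB using hBex
  set N : ℕ → ℕ := fun m => Nat.rec (max (B 0) 1) (fun m ih => max (B (m+1)) (ih+1)) m
    with hNdef
  have hN0 : N 0 = max (B 0) 1 := rfl
  have hNsucc : ∀ m, N (m+1) = max (B (m+1)) (N m + 1) := fun m => rfl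
  have hNB : ∀ m, B m ≤ N m := by
    intro m
    cases m with
    | zero => rw [hN0]; exact le_max_left _ _
    | succ m => rw [hNsucc]; exact le_max_left _ _
  have hNstrict : StrictMono N := by
    apply strictMono_nat_of_lt_succ
    intro m
    rw [hNsucc]
    exact lt_of_lt_of_le (Nat.lt_succ_self _) (le_max_right _ _)
  have hN01 : 1 ≤ N 0 := by rw [hN0]; exact le_max_right _ _
  have hbound : ∀ m, ∀ n, N m ≤ n →
      (∑ k ∈ Finset.range n, a k) / n < 1/((m+1:ℝ)^2) :=
    fun m n hn => hB m n (le_trans (hNB m) hn)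
  have hex : ∀ n : ℕ, ∃ m, n < N m := by
    intro n
    exact ⟨n+1, lt_of_lt_of_le (Nat.lt_succ_self n) (hNstrict.le_apply)⟩
  set g : ℕ → ℕ := fun n => Nat.find (hex n) with hgdef
  have hg_spec : ∀ n, n < N (g n) := fun n => Nat.find_spec (hex n)
  have hg_min : ∀ n m, n < N m → g n ≤ m := fun n m hm => Nat.find_le hm
  have hg2 : ∀ n m, N m ≤ n → m < g n := by
    intro n m hm
    by_contra hc
    push_neg at hc
    exact absurd (le_trans (hNstrict.monotone hc) hm) (not_le.2 (hg_spec n))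
  have hgmono : Monotone g := fun n n' hle =>
    hg_min n (g n') (lt_of_le_of_lt hle (hg_spec n'))
  have hglow : ∀ n, 1 ≤ g n → N (g n - 1) ≤ n := by
    intro n h1
    by_contra hc
    push_neg at hc
    have := hg_min n (g n - 1) hc
    omega
  refine ⟨fun n => n < N 0 ∨ ((g n : ℝ))⁻¹ ≤ a n, inferInstance, ?_, ?_⟩
  · -- density zero
    have hcard : ∀ n : ℕ, N 0 ≤ n →
        (({k ∈ Finset.range n | (k < N 0 ∨ ((g k : ℝ))⁻¹ ≤ a k)}).card : ℝ)
          ≤ N 0 + n / (g n : ℝ) := by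
      intro n hn
      have hgn1 : 1 ≤ g n := hg2 n 0 hn
      have hgnpos : (0:ℝ) < (g n : ℝ) := by exact_mod_cast hgn1
      have hnpos : (0:ℝ) < n := by
        have : 1 ≤ n := le_trans hN01 hn
        exact_mod_cast this
      have hsub : {k ∈ Finset.range n | (k < N 0 ∨ ((g k : ℝ))⁻¹ ≤ a k)}
          ⊆ Finset.range (N 0) ∪ {k ∈ Finset.range n | ((g n : ℝ))⁻¹ ≤ a k} := by
        intro k hk
        obtain ⟨hk1, hk2⟩ := Finset.mem_filter.1 hk
        by_cases hkN : k < N 0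
        · exact Finset.mem_union_left _ (Finset.mem_range.2 hkN)
        · refine Finset.mem_union_right _ (Finset.mem_filter.2 ⟨hk1, ?_⟩)
          rcases hk2 with hk2 | hk2
          · exact absurd hk2 hkN
          · refine le_trans ?_ hk2
            have hgk1 : 1 ≤ g k := hg2 k 0 (not_lt.1 hkN)
            have hgkpos : (0:ℝ) < (g k : ℝ) := by exact_mod_cast hgk1
            have : (g k : ℝ) ≤ (g n : ℝ) := by
              exact_mod_cast hgmono (le_of_lt (Finset.mem_range.1 hk1))
            exact inv_anti₀ hgkpos this
      have hcard1 : ({k ∈ Finset.range n | (k < N 0 ∨ ((g k : ℝ))⁻¹ ≤ a k)}).card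
          ≤ N 0 + ({k ∈ Finset.range n | ((g n : ℝ))⁻¹ ≤ a k}).card := by
        calc ({k ∈ Finset.range n | (k < N 0 ∨ ((g k : ℝ))⁻¹ ≤ a k)}).card
            ≤ (Finset.range (N 0) ∪ {k ∈ Finset.range n | ((g n : ℝ))⁻¹ ≤ a k}).card :=
              Finset.card_le_card hsub
          _ ≤ (Finset.range (N 0)).card
              + ({k ∈ Finset.range n | ((g n : ℝ))⁻¹ ≤ a k}).card :=
              Finset.card_union_le _ _
          _ = N 0 + ({k ∈ Finset.range n | ((g n : ℝ))⁻¹ ≤ a k}).card := by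
              rw [Finset.card_range]
      -- bound the second card
      have hS : (∑ k ∈ Finset.range n, a k) < n / ((g n : ℝ))^2 := by
        have hb := hbound (g n - 1) n (hglow n hgn1)
        have heq : ((g n - 1 : ℕ) + 1 : ℝ) = (g n : ℝ) := by
          have : (g n - 1) + 1 = g n := Nat.succ_pred_eq_of_pos hgn1
          exact_mod_cast this
        rw [heq] at hb
        calc (∑ k ∈ Finset.range n, a k)
            = ((∑ k ∈ Finset.range n, a k) / n) * n := by field_simp
          _ < (1/((g n : ℝ))^2) * n := by
              apply mul_lt_mul_of_pos_right hb hnpos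
          _ = n / ((g n : ℝ))^2 := by ring
      have hc2 : (({k ∈ Finset.range n | ((g n : ℝ))⁻¹ ≤ a k}).card : ℝ)
          ≤ n / (g n : ℝ) := by
        have hkey := kvn_card_mul_le_sum a hnonneg ((g n : ℝ))⁻¹ n
        have : (({k ∈ Finset.range n | ((g n : ℝ))⁻¹ ≤ a k}).card : ℝ) * ((g n : ℝ))⁻¹
            ≤ n / ((g n : ℝ))^2 := le_of_lt (lt_of_le_of_lt hkey hS)
        calc (({k ∈ Finset.range n | ((g n : ℝ))⁻¹ ≤ a k}).card : ℝ)
            = (({k ∈ Finset.range n | ((g n : ℝ))⁻¹ ≤ a k}).card : ℝ)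
              * ((g n : ℝ))⁻¹ * (g n : ℝ) := by field_simp
          _ ≤ n / ((g n : ℝ))^2 * (g n : ℝ) :=
              mul_le_mul_of_nonneg_right this (le_of_lt hgnpos)
          _ = n / (g n : ℝ) := by field_simp
      calc (({k ∈ Finset.range n | (k < N 0 ∨ ((g k : ℝ))⁻¹ ≤ a k)}).card : ℝ)
          ≤ (N 0 : ℝ) + (({k ∈ Finset.range n | ((g n : ℝ))⁻¹ ≤ a k}).card : ℝ) := by
            exact_mod_cast hcard1
        _ ≤ N 0 + n / (g n : ℝ) := by linarith
    rw [Metric.tendsto_atTop]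
    intro ε hε
    obtain ⟨m0, hm0⟩ := exists_nat_one_div_lt (show (0:ℝ) < ε/2 by linarith)
    obtain ⟨N4, hN4⟩ := Metric.tendsto_atTop.1
      (tendsto_const_div_atTop_nhds_zero_nat (N 0 : ℝ)) (ε/2) (by linarith)
    refine ⟨max (N m0) (max N4 (N 0)), fun n hn => ?_⟩
    have hnm0 : N m0 ≤ n := le_trans (le_max_left _ _) hn
    have hnN4 : N4 ≤ n := le_trans (le_trans (le_max_left _ _) (le_max_right _ _)) hn
    have hnN0 : N 0 ≤ n := le_trans (le_trans (le_max_right _ _) (le_max_right _ _)) hn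
    have hnpos : (0:ℝ) < n := by
      have : 1 ≤ n := le_trans hN01 hnN0
      exact_mod_cast this
    have hgn : m0 + 1 ≤ g n := hg2 n m0 hnm0
    have hgnpos : (0:ℝ) < (g n : ℝ) := by
      have : (0:ℕ) < g n := by omega
      exact_mod_cast this
    have h1 : ((g n : ℝ))⁻¹ ≤ 1/((m0:ℝ)+1) := by
      rw [one_div]
      apply inv_anti₀ (by positivity)
      exact_mod_cast hgn
    have h2 : (N 0 : ℝ)/n < ε/2 := by
      have := hN4 n hnN4
      rw [Real.dist_eq, sub_zero] at this
      exact lt_of_abs_lt this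
    rw [Real.dist_eq, sub_zero, abs_of_nonneg (by positivity)]
    show (({k ∈ Finset.range n | (k < N 0 ∨ ((g k : ℝ))⁻¹ ≤ a k)}).card : ℝ) / n < ε
    have hn0 : (n:ℝ) ≠ 0 := ne_of_gt hnpos
    have hg0 : ((g n):ℝ) ≠ 0 := ne_of_gt hgnpos
    calc (({k ∈ Finset.range n | (k < N 0 ∨ ((g k : ℝ))⁻¹ ≤ a k)}).card : ℝ) / n
        ≤ ((N 0 : ℝ) + n / (g n : ℝ)) / n := by
          gcongr
          exact hcard n hnN0
      _ = (N 0 : ℝ)/n + ((g n : ℝ))⁻¹ := by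
          rw [add_div]
          congr 1
          rw [div_div, mul_comm, ← div_div, div_self hn0, one_div]
      _ < ε/2 + ε/2 := by
          apply add_lt_add_of_lt_of_le h2 (le_trans h1 (le_of_lt hm0))
      _ = ε := by ring
  · -- convergence off E
    intro ε hε
    obtain ⟨m0, hm0⟩ := exists_nat_one_div_lt hε
    refine ⟨N m0, fun n hn hne => ?_⟩
    have hne' : ¬ (n < N 0 ∨ ((g n : ℝ))⁻¹ ≤ a n) := hne
    push_neg at hne'
    obtain ⟨hne1, hne2⟩ := hne'
    have hgn : m0 + 1 ≤ g n := hg2 n m0 hn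
    have h1 : ((g n : ℝ))⁻¹ ≤ 1/((m0:ℝ)+1) := by
      rw [one_div]
      apply inv_anti₀ (by positivity)
      exact_mod_cast hgn
    calc a n < ((g n : ℝ))⁻¹ := hne2
      _ ≤ 1/((m0:ℝ)+1) := h1
      _ < ε := hm0

open Filter in
theorem koopman_von_neumann (a : ℕ → ℝ)
    (hnonneg : ∀ k, 0 ≤ a k) (hbdd : ∃ C : ℝ, ∀ k, a k ≤ C) :
    Tendsto (fun n : ℕ => (∑ k ∈ Finset.range n, a k) / n) atTop (nhds 0) ↔
      ∃ E : ℕ → Prop, ∃ _ : DecidablePred E,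
        Tendsto (fun n : ℕ =>
            (({k ∈ Finset.range n | E k}).card : ℝ) / n) atTop (nhds 0) ∧
        (∀ ε > 0, ∃ N : ℕ, ∀ n ≥ N, ¬ E n → a n < ε) := by
  constructor
  · exact kvn_hard a hnonneg
  · rintro ⟨E, dec, hdens, hconv⟩
    obtain ⟨C, hC⟩ := hbdd
    have hC' : ∀ k, a k ≤ max C 1 := fun k => le_trans (hC k) (le_max_left _ _)
    have hCpos : (0:ℝ) < max C 1 := lt_of_lt_of_le one_pos (le_max_right _ _)
    exact @kvn_easy a hnonneg (max C 1) hC' hCpos E dec hdens hconv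
end
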